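/- For matrices B, C ∈ ℂ^{n×k}, the absolute value of trace(Bᴴ C) is at most the sum over i from 1 to k of σ_i(B)·σ_i(C), where σ_i denotes the i-th largest singular value. -/

import Mathlib

open scoped ComplexOrder
open Matrix

/-- The tuple `f` rearranged into decreasing order; `sortedDesc f 0` is the largest entry. -/
noncomputable def sortedDesc {m : ℕ} (f : Fin m → ℝ) : Fin m → ℝ :=
  fun i => (f ∘ Tuple.sort f) i.rev

/-- The singular values of a complex matrix, in decreasing order. -/
noncomputable def sv {n k : ℕ} (B : Matrix (Fin n) (Fin k) ℂ) : Fin k → ℝ :=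
  sortedDesc fun i =>
    Real.sqrt ((Matrix.posSemidef_conjTranspose_mul_self B).isHermitian.eigenvalues i)

/-- The trace (nuclear) norm: the sum of the singular values. -/
noncomputable def trNorm {n k : ℕ} (B : Matrix (Fin n) (Fin k) ℂ) : ℝ := ∑ i, sv B i

/-- The Frobenius norm. -/
noncomputable def frobNorm {n k : ℕ} (A : Matrix (Fin n) (Fin k) ℂ) : ℝ :=
  Real.sqrt (∑ i, ∑ j, ‖A i j‖ ^ 2)

/-- `‖sin Θ(R(X), R(Y))‖_F` where `Θ` is the diagonal matrix of canonical angles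
`θ_i = arccos σ_i(Xᴴ Y)` between the column spaces of `X` and `Y`. -/
noncomputable def sinThetaF {n k : ℕ} (X Y : Matrix (Fin n) (Fin k) ℂ) : ℝ :=
  Real.sqrt (∑ i, Real.sin (Real.arccos (sv (Xᴴ * Y) i)) ^ 2)

/-- The smallest singular value. -/
noncomputable def smin {n k : ℕ} (B : Matrix (Fin n) (Fin k) ℂ) : ℝ := ⨅ i, sv B i

/-- The spectral norm (largest singular value). -/
noncomputable def s2norm {n k : ℕ} (B : Matrix (Fin n) (Fin k) ℂ) : ℝ := ⨆ i, sv B i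

/-- The orthonormal polar factor `B (Bᴴ B)^{-1/2}` (for `B` of full column rank). -/
noncomputable def polarFactor {n k : ℕ} (B : Matrix (Fin n) (Fin k) ℂ) :
    Matrix (Fin n) (Fin k) ℂ :=
  B * ((Matrix.posSemidef_conjTranspose_mul_self B).isHermitian.eigenvectorUnitary.1 *
    diagonal ((↑) ∘ (√·) ∘ (Matrix.posSemidef_conjTranspose_mul_self B).isHermitian.eigenvalues) *
    (star (Matrix.posSemidef_conjTranspose_mul_self B).isHermitian.eigenvectorUnitary :
      Matrix (Fin k) (Fin k) ℂ))⁻¹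

/-- Eigenvalues of a Hermitian matrix, in decreasing order. -/
noncomputable def eigsDesc {n : ℕ} {H : Matrix (Fin n) (Fin n) ℂ} (hH : H.IsHermitian) :
    Fin n → ℝ :=
  sortedDesc hH.eigenvalues

/-!
Diagonalize `BᴴB = V diag(d) Vᴴ` and `CᴴC = Y diag(e) Yᴴ`. The columns `wᵢ` of `BV` and `zⱼ` of
`CY` are orthogonal, with norms the singular values of `B` and `C`, and
`tr(BᴴC) = ∑ᵢⱼ ⟪wᵢ, zⱼ⟫ (YᴴV)ⱼᵢ`. Writing `|⟪wᵢ, zⱼ⟫| = ‖wᵢ‖ ‖zⱼ‖ cos θᵢⱼ`, the matrix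
`Sᵢⱼ = cos θᵢⱼ |(YᴴV)ⱼᵢ|` is doubly substochastic: by AM-GM each row or column sum is at most the
mean of a sum of squared cosines, bounded by Bessel's inequality, and a sum of squared moduli of
entries of the unitary `YᴴV`, equal to one. For such `S` and decreasing nonnegative `σ, τ`, Abel
summation gives `∑ᵢⱼ σᵢ τⱼ Sᵢⱼ ≤ ∑ᵢ σᵢ τᵢ`.
-/

open Finset
open scoped InnerProductSpace

section Rearrangement

variable {ι : Type*} [LinearOrder ι]

theorem Finset.sum_mul_nonneg_of_antitoneOn (s : Finset ι) {σ d : ι → ℝ}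
    (hσ : AntitoneOn σ s) (hσ0 : ∀ i ∈ s, 0 ≤ σ i)
    (hd : ∀ p ∈ s, 0 ≤ ∑ i ∈ s with i ≤ p, d i) :
    0 ≤ ∑ i ∈ s, σ i * d i := by
  classical
  induction s using Finset.induction_on_max generalizing σ with
  | empty => simp
  | insert a s ha ih =>
    have has : a ∉ s := fun h => lt_irrefl a (ha a h)
    have hfilter : ∀ p ∈ s, {i ∈ insert a s | i ≤ p} = {i ∈ s | i ≤ p} := fun p hp => by
      rw [filter_insert, if_neg (ha p hp).not_ge]
    -- Abel summation at the largest index: peel off `σ a` from every weight.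
    have hsplit : ∑ i ∈ insert a s, σ i * d i
        = ∑ i ∈ s, (σ i - σ a) * d i + σ a * ∑ i ∈ insert a s, d i := by
      rw [sum_insert has, sum_insert has, mul_add, mul_sum]
      simp only [sub_mul, sum_sub_distrib]
      ring
    have hσa : ∀ i ∈ s, σ a ≤ σ i := fun i hi =>
      hσ (mem_insert_of_mem hi) (mem_insert_self a s) (ha i hi).le
    have hfilter_max : {i ∈ insert a s | i ≤ a} = insert a s :=
      filter_true_of_mem fun i hi => (mem_insert.1 hi).elim le_of_eq fun h => (ha i h).le
    rw [hsplit]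
    refine add_nonneg (ih (fun i hi j hj hij => ?_) (fun i hi => ?_) (fun p hp => ?_)) ?_
    · exact sub_le_sub_right (hσ (mem_insert_of_mem hi) (mem_insert_of_mem hj) hij) _
    · exact sub_nonneg.2 (hσa i hi)
    · rw [← hfilter p hp]; exact hd p (mem_insert_of_mem hp)
    · refine mul_nonneg (hσ0 a (mem_insert_self a s)) ?_
      rw [← hfilter_max]
      exact hd a (mem_insert_self a s)

variable [Fintype ι]

theorem sum_mul_le_sum_filter_le {τ c : ι → ℝ} (hτ : Antitone τ) (p : ι) (hτp : 0 ≤ τ p)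
    (hc0 : ∀ j, 0 ≤ c j) (hc1 : ∀ j, c j ≤ 1) (hc : ∑ j, c j ≤ #{j | j ≤ p}) :
    ∑ j, τ j * c j ≤ ∑ j with j ≤ p, τ j := by
  have key : ∀ j, τ j * c j - (if j ≤ p then τ j else 0)
      ≤ τ p * (c j - if j ≤ p then 1 else 0) := fun j => by
    split_ifs with hj
    · nlinarith [hτ hj, hc1 j]
    · nlinarith [hτ (not_le.1 hj).le, hc0 j]
  rw [← sub_nonpos, sum_filter, ← sum_sub_distrib]
  calc ∑ j, (τ j * c j - if j ≤ p then τ j else 0)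
      ≤ ∑ j, τ p * (c j - if j ≤ p then 1 else 0) := sum_le_sum fun j _ => key j
    _ = τ p * (∑ j, c j - #{j | j ≤ p}) := by rw [← mul_sum, sum_sub_distrib, sum_boole]
    _ ≤ 0 := mul_nonpos_of_nonneg_of_nonpos hτp (sub_nonpos.2 hc)

theorem sum_sum_mul_le_sum_mul_of_substochastic {σ τ : ι → ℝ} (hσ : Antitone σ)
    (hτ : Antitone τ) (hσ0 : ∀ i, 0 ≤ σ i) (hτ0 : ∀ i, 0 ≤ τ i) {S : ι → ι → ℝ}
    (hS : ∀ i j, 0 ≤ S i j) (hrow : ∀ i, ∑ j, S i j ≤ 1) (hcol : ∀ j, ∑ i, S i j ≤ 1) :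
    ∑ i, ∑ j, σ i * τ j * S i j ≤ ∑ i, σ i * τ i := by
  have hpartial : ∀ p, ∑ i with i ≤ p, ∑ j, τ j * S i j ≤ ∑ i with i ≤ p, τ i := fun p => by
    rw [sum_comm]
    simp only [← mul_sum]
    refine sum_mul_le_sum_filter_le hτ p (hτ0 p) (fun j => sum_nonneg fun i _ => hS i j)
      (fun j => (sum_le_sum_of_subset_of_nonneg (filter_subset _ _)
        fun i _ _ => hS i j).trans (hcol j)) ?_
    rw [sum_comm, card_eq_sum_ones, Nat.cast_sum]
    exact sum_le_sum fun i _ => by simpa using hrow i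
  have := univ.sum_mul_nonneg_of_antitoneOn (hσ.antitoneOn _) (fun i _ => hσ0 i)
    (d := fun i => τ i - ∑ j, τ j * S i j) fun p _ => by
      simpa [sum_sub_distrib] using hpartial p
  simpa only [mul_sub, sum_sub_distrib, sub_nonneg, mul_sum, ← mul_assoc] using this

end Rearrangement

section InnerProduct

variable {𝕜 E ι : Type*} [RCLike 𝕜] [NormedAddCommGroup E] [InnerProductSpace 𝕜 E]

theorem orthonormal_normalize {v : ι → E} (hv : Pairwise fun i j => ⟪v i, v j⟫_𝕜 = 0) :
    Orthonormal 𝕜 fun i : {i // v i ≠ 0} => (‖v i‖⁻¹ : 𝕜) • v i :=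
  ⟨fun i => norm_smul_inv_norm i.2, fun i j hij => by
    dsimp only
    rw [inner_smul_left, inner_smul_right, hv (Subtype.coe_injective.ne hij), mul_zero,
      mul_zero]⟩

theorem sum_sq_norm_inner_div_le_one [Fintype ι] (x : E) {v : ι → E}
    (hv : Pairwise fun i j => ⟪v i, v j⟫_𝕜 = 0) :
    ∑ i, (‖⟪x, v i⟫_𝕜‖ / (‖x‖ * ‖v i‖)) ^ 2 ≤ 1 := by
  classical
  have hnormalize : ∀ i : {i // v i ≠ 0},
      ‖⟪x, v i⟫_𝕜‖ / (‖x‖ * ‖v i‖) = ‖⟪(‖v i‖⁻¹ : 𝕜) • v i, x⟫_𝕜‖ / ‖x‖ := fun i => by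
    rw [inner_smul_left, norm_mul, RCLike.norm_conj, norm_inv, RCLike.norm_ofReal, abs_norm,
      norm_inner_symm, mul_comm ‖x‖, ← div_div, inv_mul_eq_div]
  have hsubtype : ∑ i, (‖⟪x, v i⟫_𝕜‖ / (‖x‖ * ‖v i‖)) ^ 2
      = ∑ i : {i // v i ≠ 0}, (‖⟪x, v i⟫_𝕜‖ / (‖x‖ * ‖v i‖)) ^ 2 := by
    rw [← sum_subtype {i | v i ≠ 0} (by simp)
      fun i => (‖⟪x, v i⟫_𝕜‖ / (‖x‖ * ‖v i‖)) ^ 2, sum_filter_of_ne]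
    intro i _ hi hvi
    simp [hvi] at hi
  rw [hsubtype]
  simp only [hnormalize, div_pow, ← sum_div]
  exact div_le_one_of_le₀ ((orthonormal_normalize hv).sum_inner_products_le x) (sq_nonneg _)

end InnerProduct

section Unitary

variable {𝕜 n : Type*} [RCLike 𝕜] [Fintype n] [DecidableEq n]

theorem Matrix.sum_norm_sq_apply_left_of_mem_unitaryGroup {U : Matrix n n 𝕜}
    (hU : U ∈ Matrix.unitaryGroup n 𝕜) (i : n) : ∑ j, ‖U j i‖ ^ 2 = 1 := by
  have h : (star U * U) i i = 1 := by
    rw [Unitary.star_mul_self_of_mem hU, Matrix.one_apply_eq]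
  simp only [Matrix.star_eq_conjTranspose, Matrix.mul_apply, Matrix.conjTranspose_apply,
    RCLike.star_def, RCLike.conj_mul] at h
  exact_mod_cast h

theorem Matrix.sum_norm_sq_apply_right_of_mem_unitaryGroup {U : Matrix n n 𝕜}
    (hU : U ∈ Matrix.unitaryGroup n 𝕜) (j : n) : ∑ i, ‖U j i‖ ^ 2 = 1 := by
  simpa [Matrix.star_eq_conjTranspose] using
    sum_norm_sq_apply_left_of_mem_unitaryGroup (Unitary.star_mem hU) j

end Unitary

theorem sum_mul_le_one_of_sum_sq_le_one {ι : Type*} (s : Finset ι) {a b : ι → ℝ}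
    (ha : ∑ i ∈ s, a i ^ 2 ≤ 1) (hb : ∑ i ∈ s, b i ^ 2 ≤ 1) : ∑ i ∈ s, a i * b i ≤ 1 := by
  have : 2 * ∑ i ∈ s, a i * b i ≤ ∑ i ∈ s, a i ^ 2 + ∑ i ∈ s, b i ^ 2 := by
    rw [mul_sum, ← sum_add_distrib]
    exact sum_le_sum fun i _ => by rw [← mul_assoc]; exact two_mul_le_add_sq _ _
  linarith

section Sorted

variable {k : ℕ}

theorem antitone_sortedDesc (f : Fin k → ℝ) : Antitone (sortedDesc f) :=
  fun _ _ hij => Tuple.monotone_sort f (Fin.rev_le_rev.2 hij)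

theorem sum_sum_mul_le_sum_sortedDesc_mul {f g : Fin k → ℝ} (hf : ∀ i, 0 ≤ f i)
    (hg : ∀ i, 0 ≤ g i) {S : Fin k → Fin k → ℝ} (hS : ∀ i j, 0 ≤ S i j)
    (hrow : ∀ i, ∑ j, S i j ≤ 1) (hcol : ∀ j, ∑ i, S i j ≤ 1) :
    ∑ i, ∑ j, f i * g j * S i j ≤ ∑ i, sortedDesc f i * sortedDesc g i := by
  set π := Fin.revPerm.trans (Tuple.sort f)
  set ρ := Fin.revPerm.trans (Tuple.sort g)
  have hreindex : ∑ i, ∑ j, f i * g j * S i j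
      = ∑ i, ∑ j, sortedDesc f i * sortedDesc g j * S (π i) (ρ j) := by
    rw [← π.sum_comp]
    exact sum_congr rfl fun i _ => (ρ.sum_comp _).symm
  rw [hreindex]
  exact sum_sum_mul_le_sum_mul_of_substochastic (antitone_sortedDesc f) (antitone_sortedDesc g)
    (fun _ => hf _) (fun _ => hg _) (fun _ _ => hS _ _)
    (fun i => (ρ.sum_comp (S (π i))).trans_le (hrow _))
    (fun j => (π.sum_comp (S · (ρ j))).trans_le (hcol _))

end Sorted

section VonNeumann

variable {𝕜 E : Type*} [RCLike 𝕜] [NormedAddCommGroup E] [InnerProductSpace 𝕜 E]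

theorem norm_sum_sum_inner_mul_le {k : ℕ} {w z : Fin k → E}
    (hw : Pairwise fun i j => ⟪w i, w j⟫_𝕜 = 0) (hz : Pairwise fun i j => ⟪z i, z j⟫_𝕜 = 0)
    {U : Matrix (Fin k) (Fin k) 𝕜} (hU : U ∈ Matrix.unitaryGroup (Fin k) 𝕜) :
    ‖∑ i, ∑ j, ⟪w i, z j⟫_𝕜 * U j i‖
      ≤ ∑ i, sortedDesc (‖w ·‖) i * sortedDesc (‖z ·‖) i := by
  set S : Fin k → Fin k → ℝ := fun i j => ‖⟪w i, z j⟫_𝕜‖ / (‖w i‖ * ‖z j‖) * ‖U j i‖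
  have hterm : ∀ i j, ‖⟪w i, z j⟫_𝕜 * U j i‖ = ‖w i‖ * ‖z j‖ * S i j := fun i j => by
    rw [norm_mul, ← mul_assoc, mul_div_cancel_of_imp']
    intro h
    exact le_antisymm (h ▸ norm_inner_le_norm _ _) (norm_nonneg _)
  have hrow : ∀ i, ∑ j, S i j ≤ 1 := fun i =>
    sum_mul_le_one_of_sum_sq_le_one _ (sum_sq_norm_inner_div_le_one (w i) hz)
      (Matrix.sum_norm_sq_apply_left_of_mem_unitaryGroup hU i).le
  have hcol : ∀ j, ∑ i, S i j ≤ 1 := fun j => by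
    refine sum_mul_le_one_of_sum_sq_le_one _ ?_
      (Matrix.sum_norm_sq_apply_right_of_mem_unitaryGroup hU j).le
    simpa only [norm_inner_symm (z j), mul_comm (‖z j‖)] using
      sum_sq_norm_inner_div_le_one (z j) hw
  calc ‖∑ i, ∑ j, ⟪w i, z j⟫_𝕜 * U j i‖
      ≤ ∑ i, ∑ j, ‖⟪w i, z j⟫_𝕜 * U j i‖ :=
        (norm_sum_le _ _).trans (sum_le_sum fun i _ => norm_sum_le _ _)
    _ = ∑ i, ∑ j, ‖w i‖ * ‖z j‖ * S i j := by simp only [hterm]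
    _ ≤ _ := sum_sum_mul_le_sum_sortedDesc_mul (fun _ => norm_nonneg _) (fun _ => norm_nonneg _)
        (fun _ _ => by positivity) hrow hcol

end VonNeumann

namespace Matrix

variable {𝕜 m ι : Type*} [RCLike 𝕜] [Fintype m]

def euclideanCol (X : Matrix m ι 𝕜) (j : ι) : EuclideanSpace 𝕜 m :=
  WithLp.toLp 2 fun r => X r j

theorem inner_euclideanCol (X Y : Matrix m ι 𝕜) (i j : ι) :
    ⟪X.euclideanCol i, Y.euclideanCol j⟫_𝕜 = (Xᴴ * Y) i j := by
  simp only [euclideanCol, EuclideanSpace.inner_toLp_toLp, dotProduct, mul_apply,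
    conjTranspose_apply, Pi.star_apply, mul_comm]

variable [DecidableEq ι]

theorem pairwise_inner_euclideanCol_eq_zero {X : Matrix m ι 𝕜} {d : ι → 𝕜}
    (hX : Xᴴ * X = diagonal d) :
    Pairwise fun i j => ⟪X.euclideanCol i, X.euclideanCol j⟫_𝕜 = 0 := fun i j hij => by
  dsimp only
  rw [inner_euclideanCol, hX, diagonal_apply_ne _ hij]

theorem norm_euclideanCol {X : Matrix m ι 𝕜} {d : ι → ℝ}
    (hX : Xᴴ * X = diagonal (RCLike.ofReal ∘ d)) (i : ι) : ‖X.euclideanCol i‖ = √(d i) := by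
  have h : ‖X.euclideanCol i‖ ^ 2 = d i := by
    rw [@norm_sq_eq_re_inner 𝕜, inner_euclideanCol, hX, diagonal_apply_eq, Function.comp_apply,
      RCLike.ofReal_re]
  rw [← h, Real.sqrt_sq (norm_nonneg _)]

variable [Fintype ι]

theorem conjTranspose_mul_self_eigenvectorUnitary (B : Matrix m ι 𝕜)
    (hB : (Bᴴ * B).IsHermitian) :
    (B * (hB.eigenvectorUnitary : Matrix ι ι 𝕜))ᴴ * (B * (hB.eigenvectorUnitary : Matrix ι ι 𝕜))
      = diagonal (RCLike.ofReal ∘ hB.eigenvalues) := by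
  rw [← hB.conjStarAlgAut_star_eigenvectorUnitary, Unitary.conjStarAlgAut_star_apply,
    conjTranspose_mul, star_eq_conjTranspose]
  simp only [Matrix.mul_assoc]

theorem trace_conjTranspose_mul_eq_sum (B C : Matrix m ι 𝕜) {V Y : Matrix ι ι 𝕜}
    (hV : V ∈ unitaryGroup ι 𝕜) (hY : Y ∈ unitaryGroup ι 𝕜) :
    (Bᴴ * C).trace
      = ∑ i, ∑ j, ⟪(B * V).euclideanCol i, (C * Y).euclideanCol j⟫_𝕜 * (Yᴴ * V) j i := by
  have hconj : (B * V)ᴴ * (C * Y) * (Yᴴ * V) = Vᴴ * (Bᴴ * C) * V := by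
    rw [conjTranspose_mul]
    simp only [Matrix.mul_assoc]
    rw [← Matrix.mul_assoc Y, ← star_eq_conjTranspose Y, Unitary.mul_star_self_of_mem hY,
      Matrix.one_mul]
  calc (Bᴴ * C).trace = (V * Vᴴ * (Bᴴ * C)).trace := by
        rw [← star_eq_conjTranspose, Unitary.mul_star_self_of_mem hV, Matrix.one_mul]
    _ = (Vᴴ * (Bᴴ * C) * V).trace := by rw [Matrix.mul_assoc, trace_mul_comm]
    _ = _ := by simp only [← hconj, trace, diag_apply, mul_apply, inner_euclideanCol]

end Matrix

theorem sv_eq_sortedDesc_norm_euclideanCol {n k : ℕ} (B : Matrix (Fin n) (Fin k) ℂ) :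
    sv B = sortedDesc fun i => ‖(B * ((posSemidef_conjTranspose_mul_self B).isHermitian
      |>.eigenvectorUnitary : Matrix (Fin k) (Fin k) ℂ)).euclideanCol i‖ := by
  simp only [norm_euclideanCol (conjTranspose_mul_self_eigenvectorUnitary _ _)]
  rfl

theorem vonNeumann_trace_inequality_general {n k : ℕ} (B C : Matrix (Fin n) (Fin k) ℂ) :
    ‖Matrix.trace (Bᴴ * C)‖ ≤ ∑ i, sv B i * sv C i := by
  let V := (posSemidef_conjTranspose_mul_self B).isHermitian.eigenvectorUnitary
  let Y := (posSemidef_conjTranspose_mul_self C).isHermitian.eigenvectorUnitary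
  have hM : (Y : Matrix (Fin k) (Fin k) ℂ)ᴴ * V ∈ unitaryGroup (Fin k) ℂ := by
    rw [← star_eq_conjTranspose]
    exact mul_mem (Unitary.star_mem Y.2) V.2
  rw [trace_conjTranspose_mul_eq_sum B C V.2 Y.2, sv_eq_sortedDesc_norm_euclideanCol B,
    sv_eq_sortedDesc_norm_euclideanCol C]
  exact norm_sum_sum_inner_mul_le
    (pairwise_inner_euclideanCol_eq_zero (conjTranspose_mul_self_eigenvectorUnitary B _))
    (pairwise_inner_euclideanCol_eq_zero (conjTranspose_mul_self_eigenvectorUnitary C _)) hM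

/-- Von Neumann's trace inequality. -/
theorem vonNeumann_trace_inequality {n k : ℕ} (hkn : k ≤ n)
    (B C : Matrix (Fin n) (Fin k) ℂ) :
    ‖Matrix.trace (Bᴴ * C)‖ ≤ ∑ i, sv B i * sv C i :=
  vonNeumann_trace_inequality_general B C
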